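/- arXiv:1308.5334 — 2 statements merged into one kernel-verified Lean document; each statement's English description precedes it below -/
import Mathlib

section
/- No ε-semantics can be an over-approximation of the standard semantics: for any ε > 0 and n ≥ 1, there is no function f mapping subsets of ℝⁿ to subsets of ℝⁿ such that for every set S: (i) S ⊆ f(S), (ii) f(S) ∩ f(Sᶜ) = ∅, and (iii) f(S) is either empty or contains an open ball of radius ε. -/
open Set Filter Topology

theorem Set.eq_of_subset_of_compl_subset_of_disjoint {α : Type*} {S A B : Set α}
    (hSA : S ⊆ A) (hSB : Sᶜ ⊆ B) (hAB : Disjoint A B) : A = S :=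
  hSA.antisymm' <| compl_subset_compl.mp <| hSB.trans hAB.subset_compl_left

theorem Metric.ball_not_subset_singleton {α : Type*} [PseudoMetricSpace α]
    [∀ x : α, (𝓝[≠] x).NeBot] {ε : ℝ} (hε : 0 < ε) (p x : α) :
    ¬ Metric.ball p ε ⊆ {x} := fun h => by
  simpa [interior_singleton] using
    Metric.isOpen_ball.subset_interior_iff.mpr h (Metric.mem_ball_self hε)

theorem no_over_approx_eps_semantics (n : ℕ) (hn : 1 ≤ n) (ε : ℝ) (hε : 0 < ε) :
    ¬ ∃ f : Set (EuclideanSpace ℝ (Fin n)) → Set (EuclideanSpace ℝ (Fin n)),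
      ∀ S : Set (EuclideanSpace ℝ (Fin n)),
        S ⊆ f S ∧ f S ∩ f Sᶜ = ∅ ∧
          (f S = ∅ ∨ ∃ p, Metric.ball p ε ⊆ f S) := by
  rintro ⟨f, hf⟩
  have hfix (S) : f S = S :=
    eq_of_subset_of_compl_subset_of_disjoint (hf S).1 (hf Sᶜ).1
      (disjoint_iff_inter_eq_empty.mpr (hf S).2.1)
  -- makes the space nontrivial, hence every punctured neighbourhood filter `NeBot`
  have : Nonempty (Fin n) := ⟨⟨0, hn⟩⟩
  obtain hempty | ⟨p, hball⟩ := (hf {0}).2.2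
  · exact singleton_ne_empty _ (hfix {0} ▸ hempty)
  · exact Metric.ball_not_subset_singleton hε p 0 (hfix {0} ▸ hball)
end

section
/- Alternation normal form for traces: let c and d be binary relations on a type α, and suppose c is reflexive and transitive. Then for all x, y, the reflexive-transitive closure of (c ∪ d) relates x to y if and only if there exists z such that the reflexive-transitive closure of the composed relation (a ↦ b iff ∃ m, c a m ∧ d m b) relates x to z, and c z y. -/
/-!
Read a `c ∪ d` trace from left to right while keeping its tail as a single `c`-step: a further
`c`-step is absorbed into it by transitivity, and a `d`-step closes the phase `c ; d` and starts
a new, empty phase, which is a `c`-step by reflexivity.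
-/

open Relation

section

variable {α : Type*} {c d : α → α → Prop}

theorem exists_reflTransGen_comp_of_reflTransGen_or [Std.Refl c] [IsTrans α c] {x y : α}
    (h : ReflTransGen (fun a b => c a b ∨ d a b) x y) :
    ∃ z, ReflTransGen (Comp c d) x z ∧ c z y := by
  induction h with
  | refl => exact ⟨x, .refl, refl_of c x⟩
  | tail _ hstep ih =>
    obtain ⟨z, hxz, hzb⟩ := ih
    rcases hstep with hc | hd
    · exact ⟨z, hxz, trans_of c hzb hc⟩
    · exact ⟨_, hxz.tail ⟨_, hzb, hd⟩, refl_of c _⟩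

theorem reflTransGen_or_of_reflTransGen_comp {x z y : α} (hxz : ReflTransGen (Comp c d) x z)
    (hzy : c z y) : ReflTransGen (fun a b => c a b ∨ d a b) x y := by
  have phases_unfold : ReflTransGen (fun a b => c a b ∨ d a b) x z :=
    hxz.lift' id fun _ _ ⟨_, hc, hd⟩ => .head (.inl hc) (.single (.inr hd))
  exact phases_unfold.tail (.inl hzy)

end

theorem alternation_normal_form {α : Type*} (c d : α → α → Prop)
    (hrefl : ∀ a, c a a) (htrans : ∀ a b e, c a b → c b e → c a e) :
    ∀ x y : α,
      Relation.ReflTransGen (fun a b => c a b ∨ d a b) x y ↔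
        ∃ z, Relation.ReflTransGen (fun a b => ∃ m, c a m ∧ d m b) x z ∧ c z y := by
  have : Std.Refl c := ⟨hrefl⟩
  have : IsTrans α c := ⟨htrans⟩
  intro x y
  refine ⟨exists_reflTransGen_comp_of_reflTransGen_or, ?_⟩
  rintro ⟨z, hxz, hzy⟩
  exact reflTransGen_or_of_reflTransGen_comp hxz hzy
end
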